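/- arXiv:2506.16171 — 2 statements merged into one kernel-verified Lean document; each statement's English description precedes it below -/
import Mathlib

section
/- Let ε > 0 be a real number, let G = (V, E, A) be a mixed graph on a finite vertex set whose underlying graph UG(G) is connected, whose undirected edge set E forms a forest, and which is dismembered, with k = |A| ≥ 1, and let w : V → ℕ. Let T₁, …, T_q be the undirected components of G and for each i let 𝒯_i be an (ε/(392·k³))-optimal replacement set for ((G,w), T_i). Then there exists an orientation D of G that is (1−ε)-optimal for (G,w) (i.e. R(D,w) ≥ (1−ε)·R(D',w) for every orientation D' of G) and such that for each i ∈ {1,…,q}, the orientation of T_i inherited from D belongs to 𝒯_i. -/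
open Finset

variable {V : Type*}

-- `kappa A u v = 1` if `v` is reachable from `u` in the digraph with arc relation `A`.
open Classical in
noncomputable def kappa (A : V → V → Prop) (u v : V) : ℕ :=
  if Relation.ReflTransGen A u v then 1 else 0

/-- `R(D, w) = 2 ∑_v C(w(v), 2) + ∑_{(u,v), u ≠ v} w(u) w(v) κ_D(u,v)`. -/
noncomputable def Rw [Fintype V] [DecidableEq V] (A : V → V → Prop) (w : V → ℕ) : ℕ :=
  2 * ∑ v, Nat.choose (w v) 2 +
    ∑ p ∈ Finset.univ.offDiag, w p.1 * w p.2 * kappa A p.1 p.2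

/-- A mixed graph: a set of undirected edges (unordered pairs of distinct vertices)
together with a set of arcs (ordered pairs of distinct vertices). -/
structure MixedGraph (V : Type*) where
  edges : Finset (Sym2 V)
  arcs : Finset (V × V)
  edges_not_diag : ∀ e ∈ edges, ¬ e.IsDiag
  arcs_ne : ∀ a ∈ arcs, a.1 ≠ a.2

namespace MixedGraph

/-- The simple graph formed by the undirected edges of `G`. -/
def edgeGraph (G : MixedGraph V) : SimpleGraph V where
  Adj u v := s(u, v) ∈ G.edges
  symm := by
    constructor
    intro u v h
    rwa [Sym2.eq_swap] at h
  loopless := by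
    constructor
    intro v h
    exact G.edges_not_diag _ h (Sym2.mk_isDiag_iff.mpr rfl)

/-- The underlying graph of `G`: edges plus (forgotten) arcs. -/
def UG (G : MixedGraph V) : SimpleGraph V where
  Adj u v := s(u, v) ∈ G.edges ∨ (u, v) ∈ G.arcs ∨ (v, u) ∈ G.arcs
  symm := by
    constructor
    intro u v h
    rcases h with h | h | h
    · left; rwa [Sym2.eq_swap] at h
    · right; right; exact h
    · right; left; exact h
  loopless := by
    constructor
    intro v h
    rcases h with h | h | h
    · exact G.edges_not_diag _ h (Sym2.mk_isDiag_iff.mpr rfl)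
    · exact G.arcs_ne _ h rfl
    · exact G.arcs_ne _ h rfl

/-- The arc relation of the orientation of `G` determined by the choice `o` of
directions for the undirected edges: all arcs of `G` together with the arcs of `o`. -/
def dig (G : MixedGraph V) (o : V → V → Prop) : V → V → Prop :=
  fun u v => (u, v) ∈ G.arcs ∨ o u v

/-- The set of vertices incident to an arc of `G`. -/
def arcVerts (G : MixedGraph V) : Set V := {v | ∃ a ∈ G.arcs, a.1 = v ∨ a.2 = v}

/-- `G` is dismembered: every undirected component of `G` contains at most one vertex
incident to an arc, or contains exactly two vertices incident to arcs, each of them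
incident to exactly one arc. -/
def Dismembered [DecidableEq V] (G : MixedGraph V) : Prop :=
  ∀ c : G.edgeGraph.ConnectedComponent,
    (c.supp ∩ G.arcVerts).Subsingleton ∨
      ∃ a b : V, a ≠ b ∧ c.supp ∩ G.arcVerts = {a, b} ∧
        (G.arcs.filter fun p => p.1 = a ∨ p.2 = a).card = 1 ∧
        (G.arcs.filter fun p => p.1 = b ∨ p.2 = b).card = 1

/-- The edges of the undirected component `c` of `G`. -/
def compEdges (G : MixedGraph V) (c : G.edgeGraph.ConnectedComponent) :
    Set (Sym2 V) := {e | e ∈ G.edges ∧ ∀ v ∈ e, v ∈ c.supp}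

end MixedGraph

/-- `o` chooses exactly one direction for each edge in `E'`, and relates nothing else.
Orientations of a mixed graph `G` correspond to choices `o` with
`OrientsEdges ↑G.edges o`, the orientation being the digraph `G.dig o`. -/
def OrientsEdges (E' : Set (Sym2 V)) (o : V → V → Prop) : Prop :=
  (∀ u v, o u v → s(u, v) ∈ E') ∧ (∀ u v, s(u, v) ∈ E' → (o u v ↔ ¬ o v u))

/-- The orientation of the undirected component `c` inherited from the
edge-orientation `o`. -/
def inheritO (G : MixedGraph V) (c : G.edgeGraph.ConnectedComponent)
    (o : V → V → Prop) : V → V → Prop :=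
  fun u v => o u v ∧ u ∈ c.supp ∧ v ∈ c.supp

/-- The edge-orientation obtained from `o` by reorienting the edges of the
undirected component `c` according to `oT` (this is `D⟨T'⟩`). -/
def replaceO (G : MixedGraph V) (c : G.edgeGraph.ConnectedComponent)
    (o oT : V → V → Prop) : V → V → Prop :=
  fun u v => (o u v ∧ (u ∉ c.supp ∨ v ∉ c.supp)) ∨ oT u v

/-- `𝒯` is an optimal replacement set for `((G, w), T)` where `T` is the undirected
component `c`. -/
def IsOptReplacementSet [Fintype V] [DecidableEq V] (G : MixedGraph V) (w : V → ℕ)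
    (c : G.edgeGraph.ConnectedComponent) (𝒯 : Set (V → V → Prop)) : Prop :=
  (∀ oT ∈ 𝒯, OrientsEdges (G.compEdges c) oT) ∧
    ∀ o, OrientsEdges (G.edges : Set (Sym2 V)) o →
      ∃ oT ∈ 𝒯, Rw (G.dig o) w ≤ Rw (G.dig (replaceO G c o oT)) w

/-- `𝒯` is a `δ`-optimal replacement set for `((G, w), T)` where `T` is the
undirected component `c`. -/
def IsApproxReplacementSet [Fintype V] [DecidableEq V] (G : MixedGraph V) (w : V → ℕ)
    (c : G.edgeGraph.ConnectedComponent) (δ : ℝ) (𝒯 : Set (V → V → Prop)) : Prop :=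
  (∀ oT ∈ 𝒯, OrientsEdges (G.compEdges c) oT) ∧
    ∀ o, OrientsEdges (G.edges : Set (Sym2 V)) o →
      ∃ oT ∈ 𝒯, (Rw (G.dig o) w : ℝ) - δ * (∑ v, (w v : ℝ)) ^ 2
        ≤ (Rw (G.dig (replaceO G c o oT)) w : ℝ)

/-!
Start from an optimal orientation and replace, one undirected component `T` after the other,
its orientation by a member of the replacement set of `T`; each step loses at most
`δ S²` with `S = ∑ w`, and earlier components are not touched again. Since `UG(G)` is
connected, every undirected component contains an endpoint of an arc, so there are `q ≤ 2k`
components, and it remains to see `q S² ≤ 392 k³ OPT`.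

For this, orient each tree `T` of total weight `W_T` around a weighted centroid `v`: group
the branches at `v` into a union `Z` of weight between `W_T/4` and `3W_T/4` (or else `v`
carries weight `≥ 3W_T/4`), and direct the edges in `Z` towards `v`, the others away from
`v`. All of `Z` then reaches everything else, so `OPT ≥ (∑_T W_T² - S)/32`, and
Cauchy–Schwarz, `S² ≤ q ∑_T W_T²`, finishes the estimate.
-/

namespace SimpleGraph

variable {V : Type*} {H : SimpleGraph V}

lemma ne_of_reachable_deleteIncidenceSet {v u x : V} (hu : u ≠ v)
    (h : (H.deleteIncidenceSet v).Reachable u x) : x ≠ v := by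
  rintro rfl
  obtain ⟨p⟩ := h.symm
  cases p with
  | nil => exact hu rfl
  | cons h _ => exact (deleteIncidenceSet_adj.1 h).2.1 rfl

lemma exists_adj_reachable_deleteIncidenceSet {u v : V} (p : H.Walk u v) (hu : u ≠ v) :
    ∃ v', H.Adj v v' ∧ (H.deleteIncidenceSet v).Reachable u v' := by
  induction p with
  | nil => exact absurd rfl hu
  | @cons x y z h p ih =>
    by_cases hy : y = z
    · subst hy
      exact ⟨x, h.symm, .rfl⟩
    · obtain ⟨v', hadj, hr⟩ := ih hy
      exact ⟨v', hadj, (deleteIncidenceSet_adj.2 ⟨h, hu, hy⟩).reachable.trans hr⟩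

lemma reachable_deleteIncidenceSet_or {x v v' : V} (p : H.Walk x v) (hv : v ≠ v') :
    (H.deleteIncidenceSet v).Reachable x v' ∨ (H.deleteIncidenceSet v').Reachable x v := by
  induction p with
  | nil => exact .inr .rfl
  | @cons x y z h p ih =>
    by_cases hxv : x = z
    · exact .inr (hxv ▸ .rfl)
    by_cases hxv' : x = v'
    · exact .inl (hxv' ▸ .rfl)
    rcases ih hv with hr | hr
    · by_cases hyv : y = z
      · subst hyv
        exact .inr (deleteIncidenceSet_adj.2 ⟨h, hxv', hv⟩).reachable
      · exact .inl ((deleteIncidenceSet_adj.2 ⟨h, hxv, hyv⟩).reachable.trans hr)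
    · by_cases hyv' : y = v'
      · subst hyv'
        exact .inl (deleteIncidenceSet_adj.2 ⟨h, hxv, hv.symm⟩).reachable
      · exact .inr ((deleteIncidenceSet_adj.2 ⟨h, hxv', hyv'⟩).reachable.trans hr)

lemma IsAcyclic.not_reachable_deleteIncidenceSet (hH : H.IsAcyclic) {v v' x : V}
    (hadj : H.Adj v v') (h : (H.deleteIncidenceSet v').Reachable v x) :
    ¬ (H.deleteIncidenceSet v).Reachable x v' := by
  have hle : ∀ a ∈ s(v, v'), H.deleteIncidenceSet a ≤ H.deleteEdges {s(v, v')} := fun a ha =>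
    deleteEdges_anti (Set.singleton_subset_iff.2 ⟨hadj, ha⟩)
  exact fun h' => isAcyclic_iff_forall_adj_isBridge.1 hH hadj
    ((h.mono (hle v' (Sym2.mem_mk_right _ _))).trans
      (h'.mono (hle v (Sym2.mem_mk_left _ _))))

lemma exists_adj_dist_lt {v a : V} (ha : a ≠ v) (hr : H.Reachable v a) :
    ∃ b, H.Adj a b ∧ H.dist v b < H.dist v a := by
  obtain ⟨p, hp⟩ := hr.exists_walk_length_eq_dist
  obtain ⟨b, hab, q, hq⟩ := Walk.exists_eq_cons_of_ne ha p.reverse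
  have hlen := congrArg Walk.length hq
  rw [Walk.length_reverse, Walk.length_cons, hp] at hlen
  exact ⟨b, hab, (dist_le q.reverse).trans_lt (by rw [Walk.length_reverse]; omega)⟩

open Classical in
noncomputable def branch [Fintype V] (H : SimpleGraph V) (v u : V) : Finset V :=
  {x | (H.deleteIncidenceSet v).Reachable u x}

variable [Fintype V]

lemma mem_branch {v u x : V} : x ∈ H.branch v u ↔ (H.deleteIncidenceSet v).Reachable u x := by
  simp [branch]

lemma mem_branch_self (v u : V) : u ∈ H.branch v u :=
  mem_branch.2 .rfl

lemma branch_eq_of_mem {v u x : V} (h : x ∈ H.branch v u) : H.branch v x = H.branch v u := by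
  ext y
  simp only [mem_branch] at h ⊢
  exact ⟨h.trans, h.symm.trans⟩

lemma branch_subset_supp [DecidableEq V] [DecidableRel H.Adj] {c : H.ConnectedComponent}
    {v u : V} (hu : u ∈ c.supp) : H.branch v u ⊆ c.supp.toFinset := by
  intro x hx
  rw [Set.mem_toFinset, ConnectedComponent.mem_supp_iff,
    ← (ConnectedComponent.mem_supp_iff _ _).1 hu]
  exact ConnectedComponent.eq.2 ((mem_branch.1 hx).mono (deleteIncidenceSet_le H v)).symm

lemma IsAcyclic.disjoint_branch (hH : H.IsAcyclic) {v v' u : V} (hadj : H.Adj v v')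
    (hv' : v' ∈ H.branch v u) : Disjoint (H.branch v' v) (H.branch v u) :=
  Finset.disjoint_left.2 fun _ hx hx' => hH.not_reachable_deleteIncidenceSet hadj
    (mem_branch.1 hx) ((mem_branch.1 hx').symm.trans (mem_branch.1 hv'))

lemma branch_subset_erase [DecidableEq V] {v v' u u' : V} (hv : v ≠ v')
    (hv' : v' ∈ H.branch v u) (hu' : u' ≠ v') (hu'v : H.Reachable u' v)
    (hu'b : u' ∉ H.branch v' v) :
    H.branch v' u' ⊆ (H.branch v u).erase v' := fun x hx => by
  rw [mem_branch] at hx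
  rw [Finset.mem_erase, mem_branch]
  obtain ⟨p⟩ := ((hx.mono (deleteIncidenceSet_le H v')).symm.trans hu'v)
  refine ⟨ne_of_reachable_deleteIncidenceSet hu' hx, ?_⟩
  rcases reachable_deleteIncidenceSet_or p hv with h | h
  · exact (mem_branch.1 hv').trans h.symm
  · exact absurd (mem_branch.2 (h.symm.trans hx.symm)) hu'b

variable [DecidableEq V] [DecidableRel H.Adj]

theorem IsAcyclic.exists_centroid (hH : H.IsAcyclic) (w : V → ℕ) (c : H.ConnectedComponent) :
    ∃ v ∈ c.supp, ∀ u ∈ c.supp, u ≠ v →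
      2 * ∑ x ∈ H.branch v u, w x ≤ ∑ x ∈ c.supp.toFinset, w x := by
  set W := ∑ x ∈ c.supp.toFinset, w x
  by_contra! hheavy
  -- Take a heavy branch of least size: the heavy branch at the neighbour of `v` inside it
  -- is strictly smaller.
  let P := (c.supp.toFinset ×ˢ c.supp.toFinset).filter fun p =>
    p.2 ≠ p.1 ∧ W < 2 * ∑ x ∈ H.branch p.1 p.2, w x
  obtain ⟨v₀, hv₀⟩ := c.nonempty_supp
  obtain ⟨u₀, hu₀, hne₀, hheavy₀⟩ := hheavy v₀ hv₀
  obtain ⟨⟨v, u⟩, hP, hmin⟩ := P.exists_min_image (fun p => (H.branch p.1 p.2).card)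
    ⟨(v₀, u₀), by simp [P, hv₀, hu₀, hne₀, hheavy₀]⟩
  simp only [P, Finset.mem_filter, Finset.mem_product, Set.mem_toFinset] at hP
  obtain ⟨⟨hv, hu⟩, hne, hK⟩ := hP
  have hreach : ∀ {a b}, a ∈ c.supp → b ∈ c.supp → H.Reachable a b := fun ha hb =>
    ConnectedComponent.exact (ha.trans hb.symm)
  obtain ⟨v', hadj, hv'⟩ := exists_adj_reachable_deleteIncidenceSet (hreach hu hv).some hne
  rw [← mem_branch] at hv'
  have hv'c : v' ∈ c.supp := Set.mem_toFinset.1 (branch_subset_supp hu hv')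
  obtain ⟨u', hu', hne', hK'⟩ := hheavy v' hv'c
  have hu'b : u' ∉ H.branch v' v := fun h => by
    have hsum := Finset.sum_union (f := w) (hH.disjoint_branch hadj hv')
    have hsub := Finset.sum_le_sum_of_subset (f := w)
      (Finset.union_subset (branch_subset_supp (v := v') hv) (branch_subset_supp (v := v) hu))
    rw [branch_eq_of_mem h] at hK'
    omega
  have hlt : (H.branch v' u').card < (H.branch v u).card :=
    (Finset.card_le_card (branch_subset_erase hadj.ne hv' hne' (hreach hu' hv) hu'b)).trans_lt
      (Finset.card_erase_lt_of_mem hv')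
  exact hlt.not_ge (hmin (v', u') (by simp [P, hv'c, hu', hne', hK']))

lemma exists_balanced_split (w : V → ℕ) {c : H.ConnectedComponent} {v : V}
    (hcent : ∀ u ∈ c.supp, u ≠ v →
      2 * ∑ x ∈ H.branch v u, w x ≤ ∑ x ∈ c.supp.toFinset, w x) :
    (∃ Z ⊆ c.supp.toFinset, v ∉ Z ∧
      (∀ a ∈ Z, ∀ b, (H.deleteIncidenceSet v).Reachable a b → b ∈ Z) ∧
      ∑ x ∈ c.supp.toFinset, w x ≤ 4 * ∑ x ∈ Z, w x ∧
      4 * ∑ x ∈ Z, w x ≤ 3 * ∑ x ∈ c.supp.toFinset, w x) ∨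
    3 * ∑ x ∈ c.supp.toFinset, w x ≤ 4 * w v := by
  classical
  set s := c.supp.toFinset
  set W := ∑ x ∈ s, w x
  let P := s.powerset.filter fun Z => v ∉ Z ∧
    (∀ a ∈ Z, ∀ b, (H.deleteIncidenceSet v).Reachable a b → b ∈ Z) ∧
    4 * ∑ x ∈ Z, w x ≤ 3 * W
  obtain ⟨Z, hZP, hZmax⟩ :=
    P.exists_max_image (fun Z => ∑ x ∈ Z, w x) ⟨∅, by simp [P]⟩
  simp only [P, Finset.mem_filter, Finset.mem_powerset] at hZP
  obtain ⟨hZs, hvZ, hZcl, hZW⟩ := hZP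
  by_cases hW : W ≤ 4 * ∑ x ∈ Z, w x
  · exact .inl ⟨Z, hZs, hvZ, hZcl, hW, hZW⟩
  right
  -- A branch outside `Z` of positive weight could be added to `Z`, contradicting maximality.
  have hzero : ∀ u ∈ s, u ≠ v → u ∉ Z → w u = 0 := by
    intro u hu huv huZ
    have hdisj : Disjoint Z (H.branch v u) := Finset.disjoint_left.2 fun x hxZ hxK =>
      huZ (hZcl x hxZ u (mem_branch.1 hxK).symm)
    have hmem : Z ∪ H.branch v u ∈ P := by
      have := hcent u (Set.mem_toFinset.1 hu) huv
      simp only [P, Finset.mem_filter, Finset.mem_powerset, Finset.union_subset_iff,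
        Finset.mem_union, not_or, Finset.sum_union hdisj]
      refine ⟨⟨hZs, branch_subset_supp (Set.mem_toFinset.1 hu)⟩,
        ⟨hvZ, fun h => ne_of_reachable_deleteIncidenceSet huv (mem_branch.1 h) rfl⟩,
        fun a ha b hab => ?_, by omega⟩
      rcases ha with ha | ha
      · exact .inl (hZcl a ha b hab)
      · exact .inr (mem_branch.2 ((mem_branch.1 ha).trans hab))
    have hmax := hZmax _ hmem
    rw [Finset.sum_union hdisj] at hmax
    have := Finset.single_le_sum (f := w) (fun _ _ => Nat.zero_le _) (mem_branch_self (H := H) v u)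
    omega
  have hWZ : W ≤ ∑ x ∈ insert v Z, w x := Finset.sum_le_sum_of_ne_zero fun x hx hwx => by
    by_contra h
    rw [Finset.mem_insert, not_or] at h
    exact hwx (hzero x hx h.1 h.2)
  rw [Finset.sum_insert hvZ] at hWZ
  omega

lemma sum_sum_supp_toFinset {M : Type*} [AddCommMonoid M] (f : V → M) :
    ∑ c : H.ConnectedComponent, ∑ x ∈ c.supp.toFinset, f x = ∑ x, f x := by
  classical
  rw [← Finset.sum_fiberwise Finset.univ H.connectedComponentMk f]
  refine Finset.sum_congr rfl fun c _ => Finset.sum_congr ?_ fun _ _ => rfl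
  ext x
  simp [SimpleGraph.ConnectedComponent.mem_supp_iff]

end SimpleGraph

section ReachabilityValue

variable {V : Type*}

lemma kappa_eq_one {A : V → V → Prop} {u v : V} (h : Relation.ReflTransGen A u v) :
    kappa A u v = 1 := if_pos h

lemma kappa_mono {A B : V → V → Prop} (h : ∀ a b, A a b → B a b) (u v : V) :
    kappa A u v ≤ kappa B u v := by
  unfold kappa
  split_ifs with hA hB
  · rfl
  · exact absurd (Relation.ReflTransGen.mono h _ _ hA) hB
  · exact zero_le_one
  · rfl

noncomputable def RwOn [DecidableEq V] (A : V → V → Prop) (w : V → ℕ)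
    (s : Finset V) : ℕ :=
  2 * ∑ v ∈ s, (w v).choose 2 + ∑ p ∈ s.offDiag, w p.1 * w p.2 * kappa A p.1 p.2

variable [DecidableEq V]

lemma RwOn_mono {A B : V → V → Prop} (h : ∀ a b, A a b → B a b) (w : V → ℕ)
    (s : Finset V) : RwOn A w s ≤ RwOn B w s := by
  unfold RwOn
  gcongr with p
  exact kappa_mono h _ _

lemma sum_RwOn_le_Rw [Fintype V] {ι : Type*} (A : V → V → Prop) (w : V → ℕ) (I : Finset ι)
    (s : ι → Finset V) (hs : (I : Set ι).PairwiseDisjoint s) :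
    ∑ i ∈ I, RwOn A w (s i) ≤ Rw A w := by
  have hoff : (I : Set ι).PairwiseDisjoint fun i => (s i).offDiag := fun i hi j hj hij =>
    Finset.disjoint_left.2 fun p hpi hpj =>
      Finset.disjoint_left.1 (hs hi hj hij) (Finset.mem_offDiag.1 hpi).1
        (Finset.mem_offDiag.1 hpj).1
  simp only [RwOn, Finset.sum_add_distrib, ← Finset.mul_sum]
  rw [← Finset.sum_biUnion hs, ← Finset.sum_biUnion hoff]
  exact add_le_add
    (Nat.mul_le_mul_left _ (Finset.sum_le_sum_of_subset (Finset.subset_univ _)))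
    (Finset.sum_le_sum_of_subset fun p hp => by
      obtain ⟨i, -, hp⟩ := Finset.mem_biUnion.1 hp
      obtain ⟨-, -, hne⟩ := Finset.mem_offDiag.1 hp
      exact Finset.mem_offDiag.2 ⟨Finset.mem_univ _, Finset.mem_univ _, hne⟩)

lemma mul_le_RwOn {A : V → V → Prop} (w : V → ℕ) {s X Y : Finset V} (hX : X ⊆ s)
    (hY : Y ⊆ s) (hXY : Disjoint X Y)
    (hreach : ∀ x ∈ X, ∀ y ∈ Y, Relation.ReflTransGen A x y) :
    (∑ x ∈ X, w x) * (∑ y ∈ Y, w y) ≤ RwOn A w s := by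
  rw [Finset.sum_mul_sum, ← Finset.sum_product']
  refine le_add_left (le_trans (le_of_eq (Finset.sum_congr rfl fun p hp => ?_))
    (Finset.sum_le_sum_of_subset fun p hp => ?_))
  · obtain ⟨hx, hy⟩ := Finset.mem_product.1 hp
    rw [kappa_eq_one (hreach _ hx _ hy), mul_one]
  · obtain ⟨hx, hy⟩ := Finset.mem_product.1 hp
    exact Finset.mem_offDiag.2 ⟨hX hx, hY hy, Finset.disjoint_left.1 hXY hx ∘ (· ▸ hy)⟩

lemma mul_pred_le_RwOn (A : V → V → Prop) (w : V → ℕ) {s : Finset V} {v : V}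
    (hv : v ∈ s) : w v * (w v - 1) ≤ RwOn A w s := by
  have h2 : 2 * (w v).choose 2 = w v * (w v - 1) := by
    rw [Nat.choose_two_right, Nat.mul_div_cancel' (Nat.even_mul_pred_self _).two_dvd]
  rw [← h2]
  exact le_add_right (Nat.mul_le_mul_left _
    (Finset.single_le_sum (f := fun x => (w x).choose 2) (fun _ _ => Nat.zero_le _) hv))

end ReachabilityValue

lemma mul_sq_le_of_sq_le_mul_add {q S k M : ℕ} (hq : q ≤ 2 * k) (hk : 1 ≤ k) (hM : 1 ≤ M)
    (h : S ^ 2 ≤ q * (32 * M + S)) : q * S ^ 2 ≤ 392 * k ^ 3 * M := by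
  have hk3 : k ^ 2 ≤ k ^ 3 := Nat.pow_le_pow_right hk (by norm_num)
  rcases lt_or_ge S (2 * q) with hS | hS
  · have : q * S ^ 2 ≤ q * (2 * q) ^ 2 := by gcongr
    have : q ^ 3 ≤ (2 * k) ^ 3 := by gcongr
    nlinarith
  · have hS2 : S ^ 2 ≤ 64 * q * M := by nlinarith
    have : q * S ^ 2 ≤ q * (64 * q * M) := by gcongr
    have : q ^ 2 ≤ (2 * k) ^ 2 := by gcongr
    nlinarith

lemma loss_le_of_mul_sq_le {ε : ℝ} (hε : 0 ≤ ε) {q S k M : ℕ} (hk : 1 ≤ k)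
    (h : q * S ^ 2 ≤ 392 * k ^ 3 * M) : (q : ℝ) * (ε / (392 * k ^ 3) * S ^ 2) ≤ ε * M := by
  have hR : (q : ℝ) * S ^ 2 ≤ 392 * k ^ 3 * M := by exact_mod_cast h
  have hpos : (0 : ℝ) < 392 * k ^ 3 := by positivity
  calc _ = ε * (q * S ^ 2) / (392 * k ^ 3) := by ring
    _ ≤ ε * M := by
      rw [div_le_iff₀ hpos]
      nlinarith [mul_le_mul_of_nonneg_left hR hε]

namespace MixedGraph

variable {V : Type*}

instance [DecidableEq V] (G : MixedGraph V) : DecidableRel G.edgeGraph.Adj :=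
  fun u v => inferInstanceAs (Decidable (s(u, v) ∈ G.edges))

variable {G : MixedGraph V}

lemma mem_compEdges {c : G.edgeGraph.ConnectedComponent} {u v : V} :
    s(u, v) ∈ G.compEdges c ↔ s(u, v) ∈ G.edges ∧ u ∈ c.supp ∧ v ∈ c.supp := by
  simp [compEdges]

lemma _root_.OrientsEdges.mem_supp {c : G.edgeGraph.ConnectedComponent} {oT : V → V → Prop}
    (hoT : OrientsEdges (G.compEdges c) oT) {u v : V} (h : oT u v) :
    u ∈ c.supp ∧ v ∈ c.supp :=
  (mem_compEdges.1 (hoT.1 u v h)).2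

lemma orientsEdges_replaceO {c : G.edgeGraph.ConnectedComponent} {o oT : V → V → Prop}
    (ho : OrientsEdges (G.edges : Set (Sym2 V)) o) (hoT : OrientsEdges (G.compEdges c) oT) :
    OrientsEdges (G.edges : Set (Sym2 V)) (replaceO G c o oT) := by
  refine ⟨fun u v h => h.elim (fun h => ho.1 u v h.1) fun h => (hoT.1 u v h).1, fun u v h => ?_⟩
  unfold replaceO
  by_cases hc : u ∈ c.supp ∧ v ∈ c.supp
  · have := hoT.2 u v (mem_compEdges.2 ⟨h, hc⟩)
    tauto
  · have huv : ¬ oT u v := fun h => hc (hoT.mem_supp h)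
    have hvu : ¬ oT v u := fun h => hc (hoT.mem_supp h).symm
    have := ho.2 u v h
    tauto

lemma inheritO_replaceO_self {c : G.edgeGraph.ConnectedComponent} {o oT : V → V → Prop}
    (hoT : OrientsEdges (G.compEdges c) oT) : inheritO G c (replaceO G c o oT) = oT := by
  ext u v
  have : oT u v → u ∈ c.supp ∧ v ∈ c.supp := hoT.mem_supp
  unfold inheritO replaceO
  tauto

lemma inheritO_replaceO_of_ne {c c' : G.edgeGraph.ConnectedComponent} (hc : c' ≠ c)
    {o oT : V → V → Prop} (hoT : OrientsEdges (G.compEdges c) oT) :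
    inheritO G c' (replaceO G c o oT) = inheritO G c' o := by
  ext u v
  have hdisj : u ∈ c'.supp → u ∉ c.supp := fun hu' hu =>
    hc (SimpleGraph.ConnectedComponent.mem_supp_iff _ _ |>.1 hu' ▸
      SimpleGraph.ConnectedComponent.mem_supp_iff _ _ |>.1 hu)
  have : oT u v → u ∈ c.supp ∧ v ∈ c.supp := hoT.mem_supp
  unfold inheritO replaceO
  tauto

lemma exists_mem_arcVerts_reachable {x z : V} (p : G.UG.Walk x z) (hz : z ∈ G.arcVerts) :
    ∃ y ∈ G.arcVerts, G.edgeGraph.Reachable x y := by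
  induction p with
  | nil => exact ⟨_, hz, .rfl⟩
  | @cons x y z h p ih =>
    rcases h with h | h | h
    · obtain ⟨y', hy', hr⟩ := ih hz
      exact ⟨y', hy', (SimpleGraph.Adj.reachable (G := G.edgeGraph) h).trans hr⟩
    · exact ⟨x, ⟨(x, y), h, Or.inl rfl⟩, .rfl⟩
    · exact ⟨x, ⟨(y, x), h, Or.inr rfl⟩, .rfl⟩

lemma exists_orientsEdges_of_components (oc : G.edgeGraph.ConnectedComponent → V → V → Prop)
    (hoc : ∀ c, OrientsEdges (G.compEdges c) (oc c)) :
    ∃ o, OrientsEdges (G.edges : Set (Sym2 V)) o ∧ ∀ c u v, oc c u v → G.dig o u v := by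
  refine ⟨fun u v => oc (G.edgeGraph.connectedComponentMk u) u v,
    ⟨fun u v h => ?_, fun u v h => ?_⟩, fun c u v h => Or.inr ?_⟩
  · exact (mem_compEdges.1 ((hoc _).1 u v h)).1
  · have hc : G.edgeGraph.connectedComponentMk v = G.edgeGraph.connectedComponentMk u :=
      SimpleGraph.ConnectedComponent.eq.2 (SimpleGraph.Adj.reachable (G := G.edgeGraph) h).symm
    simp only [hc]
    exact (hoc _).2 u v (mem_compEdges.2 ⟨h, rfl, hc⟩)
  · show oc _ u v
    rwa [(SimpleGraph.ConnectedComponent.mem_supp_iff _ _).1 ((hoc c).mem_supp h).1]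

section

variable [Fintype V] [DecidableEq V] (G) (w : V → ℕ)

lemma exists_optimal_orientation {o₀ : V → V → Prop}
    (ho₀ : OrientsEdges (G.edges : Set (Sym2 V)) o₀) :
    ∃ o, OrientsEdges (G.edges : Set (Sym2 V)) o ∧
      ∀ o', OrientsEdges (G.edges : Set (Sym2 V)) o' → Rw (G.dig o') w ≤ Rw (G.dig o) w :=
  Set.exists_max_image {o | OrientsEdges (G.edges : Set (Sym2 V)) o} (fun o => Rw (G.dig o) w)
    (Set.toFinite _) ⟨o₀, ho₀⟩

lemma exists_inheritO_mem_of_isApproxReplacementSet {δ : ℝ}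
    (𝒯 : G.edgeGraph.ConnectedComponent → Set (V → V → Prop))
    (h𝒯 : ∀ c, IsApproxReplacementSet G w c δ (𝒯 c))
    (C : Finset G.edgeGraph.ConnectedComponent)
    {o : V → V → Prop} (ho : OrientsEdges (G.edges : Set (Sym2 V)) o) :
    ∃ o', OrientsEdges (G.edges : Set (Sym2 V)) o' ∧
      (Rw (G.dig o) w : ℝ) - C.card * (δ * (∑ v, (w v : ℝ)) ^ 2) ≤ Rw (G.dig o') w ∧
      ∀ c ∈ C, inheritO G c o' ∈ 𝒯 c := by
  classical
  induction C using Finset.induction_on with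
  | empty => exact ⟨o, ho, by simp, by simp⟩
  | insert c C hc ih =>
    obtain ⟨o₁, ho₁, hR₁, h𝒯₁⟩ := ih
    obtain ⟨oT, hoT, hR⟩ := (h𝒯 c).2 o₁ ho₁
    have hoT' := (h𝒯 c).1 oT hoT
    refine ⟨replaceO G c o₁ oT, orientsEdges_replaceO ho₁ hoT', ?_, fun c' hc' => ?_⟩
    · rw [Finset.card_insert_of_notMem hc]
      push_cast
      linarith
    · rcases Finset.mem_insert.1 hc' with rfl | hc'
      · rwa [inheritO_replaceO_self hoT']
      · rw [inheritO_replaceO_of_ne (ne_of_mem_of_not_mem hc' hc) hoT']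
        exact h𝒯₁ c' hc'

lemma card_connectedComponent_le (hconn : G.UG.Connected) (hk : 1 ≤ G.arcs.card) :
    Fintype.card G.edgeGraph.ConnectedComponent ≤ 2 * G.arcs.card := by
  obtain ⟨a, ha⟩ := Finset.card_pos.1 hk
  let f : G.arcs × Bool → G.edgeGraph.ConnectedComponent := fun p =>
    G.edgeGraph.connectedComponentMk (if p.2 then p.1.1.1 else p.1.1.2)
  have hf : Function.Surjective f := by
    intro c
    obtain ⟨x, rfl⟩ := c.exists_rep
    obtain ⟨y, ⟨b, hb, hby⟩, hxy⟩ :=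
      exists_mem_arcVerts_reachable (hconn.preconnected x a.1).some ⟨a, ha, Or.inl rfl⟩
    rcases hby with rfl | rfl
    · exact ⟨(⟨b, hb⟩, true), SimpleGraph.ConnectedComponent.eq.2 hxy.symm⟩
    · exact ⟨(⟨b, hb⟩, false), SimpleGraph.ConnectedComponent.eq.2 hxy.symm⟩
  simpa [mul_comm] using Fintype.card_le_of_surjective f hf

end

/-- Edges of `c` inside `Z` point towards `v`, all other edges of `c` away from `v`. -/
noncomputable def throughO (G : MixedGraph V) (c : G.edgeGraph.ConnectedComponent) (v : V)
    (Z : Finset V) : V → V → Prop := fun a b =>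
  G.edgeGraph.Adj a b ∧ a ∈ c.supp ∧
    ((a ∈ Z ∨ b ∈ Z) ∧ G.edgeGraph.dist v b < G.edgeGraph.dist v a ∨
      (a ∉ Z ∧ b ∉ Z) ∧ G.edgeGraph.dist v a < G.edgeGraph.dist v b)

lemma orientsEdges_throughO (hH : G.edgeGraph.IsAcyclic) {c : G.edgeGraph.ConnectedComponent}
    {v : V} (hv : v ∈ c.supp) (Z : Finset V) :
    OrientsEdges (G.compEdges c) (G.throughO c v Z) := by
  refine ⟨fun a b h => mem_compEdges.2 ⟨h.1, h.2.1, c.mem_supp_of_adj_mem_supp h.2.1 h.1⟩,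
    fun a b h => ?_⟩
  obtain ⟨hab, ha, hb⟩ := mem_compEdges.1 h
  replace hab : G.edgeGraph.Adj a b := hab
  have hd := hH.dist_ne_of_adj (u := v) hab
    (SimpleGraph.ConnectedComponent.exact (hv.trans ha.symm))
  have hba : G.edgeGraph.Adj b a := hab.symm
  unfold throughO
  rcases lt_or_gt_of_ne hd with h | h
  · have := h.not_gt
    tauto
  · have := h.not_gt
    tauto

section

variable {c : G.edgeGraph.ConnectedComponent} {v : V} {Z : Finset V}

lemma throughO_reach_to (hv : v ∈ c.supp) (hvZ : v ∉ Z) (hZc : ∀ x ∈ Z, x ∈ c.supp)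
    (hZcl : ∀ a ∈ Z, ∀ b, (G.edgeGraph.deleteIncidenceSet v).Reachable a b → b ∈ Z)
    {x : V} (hx : x ∈ Z) : Relation.ReflTransGen (G.throughO c v Z) x v := by
  induction hd : G.edgeGraph.dist v x using Nat.strong_induction_on generalizing x with
  | _ n ih =>
  have hxv : x ≠ v := fun h => hvZ (h ▸ hx)
  have hxc : x ∈ c.supp := hZc x hx
  obtain ⟨b, hxb, hb⟩ :=
    SimpleGraph.exists_adj_dist_lt hxv (SimpleGraph.ConnectedComponent.exact (hv.trans hxc.symm))
  have hstep : G.throughO c v Z x b := ⟨hxb, hxc, .inl ⟨.inl hx, hb⟩⟩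
  by_cases hbv : b = v
  · exact .single (hbv ▸ hstep)
  · exact .head hstep (ih _ (hd ▸ hb)
      (hZcl x hx b (SimpleGraph.deleteIncidenceSet_adj.2 ⟨hxb, hxv, hbv⟩).reachable) rfl)

lemma throughO_reach_from (hv : v ∈ c.supp) (hvZ : v ∉ Z)
    (hZcl : ∀ a ∈ Z, ∀ b, (G.edgeGraph.deleteIncidenceSet v).Reachable a b → b ∈ Z)
    {y : V} (hy : y ∈ c.supp) (hyZ : y ∉ Z) :
    Relation.ReflTransGen (G.throughO c v Z) v y := by
  induction hd : G.edgeGraph.dist v y using Nat.strong_induction_on generalizing y with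
  | _ n ih =>
  by_cases hyv : y = v
  · exact hyv ▸ .refl
  obtain ⟨b, hyb, hb⟩ :=
    SimpleGraph.exists_adj_dist_lt hyv (SimpleGraph.ConnectedComponent.exact (hv.trans hy.symm))
  have hbc : b ∈ c.supp := c.mem_supp_of_adj_mem_supp hy hyb
  have hbZ : b ∉ Z := fun hbZ => hyZ (hZcl b hbZ y
    (SimpleGraph.deleteIncidenceSet_adj.2
      ⟨hyb.symm, fun h => hvZ (by rwa [h] at hbZ), hyv⟩).reachable)
  exact .tail (ih _ (hd ▸ hb) hbc hbZ rfl) ⟨hyb.symm, hbc, .inr ⟨⟨hbZ, hyZ⟩, hb⟩⟩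

end

lemma exists_orientsEdges_compEdges_sq_le [Fintype V] [DecidableEq V]
    (hH : G.edgeGraph.IsAcyclic) (w : V → ℕ) (c : G.edgeGraph.ConnectedComponent) :
    ∃ oc, OrientsEdges (G.compEdges c) oc ∧
      (∑ x ∈ c.supp.toFinset, w x) ^ 2 ≤
        32 * RwOn oc w c.supp.toFinset + ∑ x ∈ c.supp.toFinset, w x := by
  obtain ⟨v, hv, hcent⟩ := hH.exists_centroid w c
  rcases SimpleGraph.exists_balanced_split w hcent with ⟨Z, hZs, hvZ, hZcl, h₁, h₂⟩ | hbig
  · refine ⟨G.throughO c v Z, orientsEdges_throughO hH hv Z, ?_⟩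
    have hXY := mul_le_RwOn (A := G.throughO c v Z) w hZs Finset.sdiff_subset
      Finset.disjoint_sdiff fun x hx y hy =>
        (throughO_reach_to hv hvZ (fun x hx => Set.mem_toFinset.1 (hZs hx)) hZcl hx).trans
          (throughO_reach_from hv hvZ hZcl
          (Set.mem_toFinset.1 (Finset.mem_sdiff.1 hy).1) (Finset.mem_sdiff.1 hy).2)
    have hW := Finset.sum_sdiff hZs (f := w)
    nlinarith
  · refine ⟨G.throughO c v ∅, orientsEdges_throughO hH hv ∅, ?_⟩
    have hP := mul_pred_le_RwOn (G.throughO c v ∅) w (Set.mem_toFinset.2 hv)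
    set a := w v
    set W := ∑ x ∈ c.supp.toFinset, w x
    rcases a with _ | _ | a
    · simp_all
    · nlinarith
    · simp only [Nat.add_sub_cancel] at hP
      nlinarith

section

variable [Fintype V] [DecidableEq V] (G)

lemma exists_orientsEdges_sum_sq_le (hH : G.edgeGraph.IsAcyclic) (w : V → ℕ) :
    ∃ o, OrientsEdges (G.edges : Set (Sym2 V)) o ∧
      ∑ c : G.edgeGraph.ConnectedComponent, (∑ x ∈ c.supp.toFinset, w x) ^ 2 ≤
        32 * Rw (G.dig o) w + ∑ v, w v := by
  choose oc hoc hsq using exists_orientsEdges_compEdges_sq_le hH w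
  obtain ⟨o, ho, hle⟩ := exists_orientsEdges_of_components oc hoc
  have hdisj : ((Finset.univ : Finset G.edgeGraph.ConnectedComponent) : Set _).PairwiseDisjoint
      fun c : G.edgeGraph.ConnectedComponent => c.supp.toFinset := fun c _ c' _ hcc' =>
    Set.disjoint_toFinset.2 (G.edgeGraph.pairwise_disjoint_supp_connectedComponent hcc')
  refine ⟨o, ho, ?_⟩
  calc _ ≤ ∑ c, (32 * RwOn (oc c) w c.supp.toFinset + ∑ x ∈ c.supp.toFinset, w x) :=
        Finset.sum_le_sum fun c _ => hsq c
    _ ≤ 32 * ∑ c : G.edgeGraph.ConnectedComponent, RwOn (G.dig o) w c.supp.toFinset +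
        ∑ v, w v := by
        rw [Finset.sum_add_distrib, ← Finset.mul_sum, SimpleGraph.sum_sum_supp_toFinset]
        gcongr with c
        exact RwOn_mono (hle c) w _
    _ ≤ 32 * Rw (G.dig o) w + ∑ v, w v := by
        grw [sum_RwOn_le_Rw _ w Finset.univ _ hdisj]

lemma card_mul_sq_le_of_optimal (hconn : G.UG.Connected)
    (hH : G.edgeGraph.IsAcyclic) (hk : 1 ≤ G.arcs.card) (w : V → ℕ) {om : V → V → Prop}
    (hopt : ∀ o, OrientsEdges (G.edges : Set (Sym2 V)) o → Rw (G.dig o) w ≤ Rw (G.dig om) w)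
    (hM : 0 < Rw (G.dig om) w) :
    Fintype.card G.edgeGraph.ConnectedComponent * (∑ v, w v) ^ 2 ≤
      392 * G.arcs.card ^ 3 * Rw (G.dig om) w := by
  obtain ⟨o₀, ho₀, hsq⟩ := G.exists_orientsEdges_sum_sq_le hH w
  have hCS := sq_sum_le_card_mul_sum_sq (s := Finset.univ)
    (f := fun c : G.edgeGraph.ConnectedComponent => ∑ x ∈ c.supp.toFinset, w x)
  rw [SimpleGraph.sum_sum_supp_toFinset, Finset.card_univ] at hCS
  exact mul_sq_le_of_sq_le_mul_add (G.card_connectedComponent_le hconn hk) hk hM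
    (hCS.trans (Nat.mul_le_mul_left _ (hsq.trans (by have := hopt o₀ ho₀; omega))))

end

end MixedGraph

theorem stmt14_general {V : Type*} [Fintype V] [DecidableEq V] (ε : ℝ) (hε : 0 < ε)
    (G : MixedGraph V) (hconn : G.UG.Connected) (hforest : G.edgeGraph.IsAcyclic)
    (hk : 1 ≤ G.arcs.card) (w : V → ℕ)
    (𝒯 : ∀ _ : G.edgeGraph.ConnectedComponent, Set (V → V → Prop))
    (h𝒯 : ∀ c, IsApproxReplacementSet G w c
      (ε / (392 * (G.arcs.card : ℝ) ^ 3)) (𝒯 c)) :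
    ∃ o, OrientsEdges (G.edges : Set (Sym2 V)) o ∧
      (∀ o', OrientsEdges (G.edges : Set (Sym2 V)) o' →
        (1 - ε) * (Rw (G.dig o') w : ℝ) ≤ (Rw (G.dig o) w : ℝ)) ∧
      ∀ c : G.edgeGraph.ConnectedComponent, inheritO G c o ∈ 𝒯 c := by
  obtain ⟨o₀, ho₀, -⟩ := G.exists_orientsEdges_sum_sq_le hforest w
  obtain ⟨om, hom, hopt⟩ := G.exists_optimal_orientation w ho₀
  obtain ⟨o, ho, hloss, h𝒯o⟩ :=
    G.exists_inheritO_mem_of_isApproxReplacementSet w 𝒯 h𝒯 Finset.univ hom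
  have hM : (1 - ε) * (Rw (G.dig om) w : ℝ) ≤ Rw (G.dig o) w := by
    rcases Nat.eq_zero_or_pos (Rw (G.dig om) w) with hM | hM
    · simp [hM]
    have := loss_le_of_mul_sq_le hε.le hk (G.card_mul_sq_le_of_optimal hconn hforest hk w hopt hM)
    rw [Finset.card_univ, ← Nat.cast_sum] at hloss
    linarith
  refine ⟨o, ho, fun o' ho' => ?_, fun c => h𝒯o c (Finset.mem_univ c)⟩
  have hR' : (Rw (G.dig o') w : ℝ) ≤ Rw (G.dig om) w := by exact_mod_cast hopt o' ho'
  rcases le_total ε 1 with hε1 | hε1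
  · nlinarith
  · nlinarith [(Rw (G.dig o') w).cast_nonneg (α := ℝ), (Rw (G.dig o) w).cast_nonneg (α := ℝ)]

/-- Given, for every undirected component `c` of a connected, dismembered mixed graph
`(G, w)` whose undirected edges form a forest and with `k = |A| ≥ 1`, an
`(ε/(392 k³))`-optimal replacement set `𝒯 c`, there is a `(1 − ε)`-optimal
orientation of `G` whose inherited orientation on each `c` belongs to `𝒯 c`. -/
theorem stmt14 {V : Type*} [Fintype V] [DecidableEq V] (ε : ℝ) (hε : 0 < ε)
    (G : MixedGraph V) (hconn : G.UG.Connected) (hforest : G.edgeGraph.IsAcyclic)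
    (hdis : G.Dismembered) (hk : 1 ≤ G.arcs.card) (w : V → ℕ)
    (𝒯 : ∀ _ : G.edgeGraph.ConnectedComponent, Set (V → V → Prop))
    (h𝒯 : ∀ c, IsApproxReplacementSet G w c
      (ε / (392 * (G.arcs.card : ℝ) ^ 3)) (𝒯 c)) :
    ∃ o, OrientsEdges (G.edges : Set (Sym2 V)) o ∧
      (∀ o', OrientsEdges (G.edges : Set (Sym2 V)) o' →
        (1 - ε) * (Rw (G.dig o') w : ℝ) ≤ (Rw (G.dig o) w : ℝ)) ∧
      ∀ c : G.edgeGraph.ConnectedComponent, inheritO G c o ∈ 𝒯 c :=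
  stmt14_general ε hε G hconn hforest hk w 𝒯 h𝒯
end

section
/- For every positive integer q there exist a mixed graph G = (V, E, A) on a finite vertex set with exactly 2 arcs (|A| = 2) that is dismembered, a weight function w : V → ℕ, and an undirected component T of G such that every optimal replacement set for ((G,w),T) has cardinality at least q + 1. -/
/-!
`T` is a star with hub `tHub` of weight 0 and `q + 1` leaves of weight 1. A second star, with hub
`sHub` and `2q` leaves, all of weight 1, is attached by the arcs `sHub → tHub → sink`, and `sink`
has weight `q`. If `m` leaves of `T` point into `tHub` and `a` leaves of the second star point
away from `sHub`, counting reachable pairs gives `R = c(a) + m (a - m)` with `c(a)` independent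
of `m`. Taking `a = 2k` makes `m = k` the unique best choice on `T`, so an optimal replacement
set contains, for every `k ≤ q`, an orientation of `T` with exactly `k` leaves pointing into
`tHub`.
-/

open Finset

variable {V : Type*}

lemma Nat.two_mul_choose_two_add_self (n : ℕ) : 2 * n.choose 2 + n = n * n := by
  rw [Nat.choose_two_right, mul_comm, Nat.div_two_mul_two_of_even (Nat.even_mul_pred_self n)]
  cases n <;> simp [Nat.mul_succ]

lemma Finset.sum_ite_mem_zero_one {α : Type*} [Fintype α] [DecidableEq α] (s : Finset α) :
    ∑ x, (if x ∈ s then 0 else 1) = #sᶜ := by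
  simp [sum_ite, filter_not, compl_eq_univ_sdiff]

lemma SimpleGraph.Reachable.eq_of_forall_adj {G : SimpleGraph V} {β : Type*} {f : V → β}
    (hf : ∀ a b, G.Adj a b → f a = f b) {a b : V} (h : G.Reachable a b) : f a = f b := by
  rw [SimpleGraph.reachable_iff_reflTransGen] at h
  induction h with
  | refl => rfl
  | tail _ hbc ih => exact ih.trans (hf _ _ hbc)

lemma OrientsEdges.iff {E : Set (Sym2 V)} {o : V → V → Prop} (h : OrientsEdges E o) {a b : V} :
    o a b ↔ s(a, b) ∈ E ∧ ¬ o b a :=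
  ⟨fun hab => ⟨h.1 a b hab, (h.2 a b (h.1 a b hab)).1 hab⟩, fun ⟨he, hba⟩ => (h.2 a b he).2 hba⟩

lemma kappa_self (A : V → V → Prop) (v : V) : kappa A v v = 1 :=
  if_pos .refl

open Classical in
noncomputable def reachWeight [Fintype V] (A : V → V → Prop) (w : V → ℕ) (a : V) : ℕ :=
  ∑ b, if Relation.ReflTransGen A a b then w b else 0

lemma Rw_add_sum_eq [Fintype V] [DecidableEq V] (A : V → V → Prop) (w : V → ℕ) :
    Rw A w + ∑ v, w v = ∑ a, w a * reachWeight A w a := by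
  have hdiag : ∑ p ∈ univ.diag, w p.1 * w p.2 * kappa A p.1 p.2 = ∑ v, w v * w v := by
    simp [sum_diag, kappa_self]
  calc Rw A w + ∑ v, w v
      = ∑ p ∈ univ.diag, w p.1 * w p.2 * kappa A p.1 p.2 +
          ∑ p ∈ univ.offDiag, w p.1 * w p.2 * kappa A p.1 p.2 := by
        rw [Rw, hdiag, mul_sum, add_right_comm, ← sum_add_distrib]
        simp only [Nat.two_mul_choose_two_add_self]
    _ = ∑ p ∈ univ ×ˢ univ, w p.1 * w p.2 * kappa A p.1 p.2 := by
        rw [← sum_union (disjoint_diag_offDiag _), diag_union_offDiag]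
    _ = ∑ a, w a * reachWeight A w a := by
        simp only [sum_product, reachWeight, mul_sum, kappa, mul_ite, mul_one, mul_zero]

open Classical in
lemma reachWeight_eq_add [Fintype V] {A : V → V → Prop} {a : V} {P : V → Prop} (w : V → ℕ)
    (h : ∀ b, Relation.ReflTransGen A a b ↔ b = a ∨ P b) (ha : ¬ P a) :
    reachWeight A w a = w a + ∑ b, if P b then w b else 0 := by
  have hsplit (b : V) : (if Relation.ReflTransGen A a b then w b else 0) =
      (if a = b then w b else 0) + if P b then w b else 0 := by
    by_cases hb : b = a
    · subst hb
      simp [ha, Relation.ReflTransGen.refl]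
    · simp [h, hb, Ne.symm hb]
  simp only [reachWeight, hsplit, sum_add_distrib, sum_ite_eq, mem_univ, if_true]

namespace StarGadget

abbrev Vtx (q : ℕ) := Fin (q + 1) ⊕ Fin (2 * q) ⊕ Fin 3

variable {q : ℕ}

abbrev tLeaf (i : Fin (q + 1)) : Vtx q := .inl i
abbrev sLeaf (j : Fin (2 * q)) : Vtx q := .inr (.inl j)
abbrev tHub : Vtx q := .inr (.inr 0)
abbrev sHub : Vtx q := .inr (.inr 1)
abbrev sink : Vtx q := .inr (.inr 2)

variable (q) in
def graph : MixedGraph (Vtx q) where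
  edges := univ.image (fun i => s(tLeaf i, tHub)) ∪ univ.image (fun j => s(sLeaf j, sHub))
  arcs := {(sHub, tHub), (tHub, sink)}
  edges_not_diag := by
    simp only [mem_union, mem_image, mem_univ, true_and]
    rintro e (⟨i, rfl⟩ | ⟨j, rfl⟩) <;> simp
  arcs_ne := by simp

variable (q) in
def weight : Vtx q → ℕ := Sum.elim (fun _ => 1) (Sum.elim (fun _ => 1) ![0, 1, q])

/-- The orientation of `graph q` in which the leaves in `I` and `J` point to their hub and all
other leaves point away from it. -/
def orient (I : Finset (Fin (q + 1))) (J : Finset (Fin (2 * q))) (a b : Vtx q) : Prop :=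
  (∃ i ∈ I, a = tLeaf i ∧ b = tHub) ∨ (∃ i ∉ I, a = tHub ∧ b = tLeaf i) ∨
    (∃ j ∈ J, a = sLeaf j ∧ b = sHub) ∨ (∃ j ∉ J, a = sHub ∧ b = sLeaf j)

lemma mem_edges {e : Sym2 (Vtx q)} :
    e ∈ (graph q).edges ↔ (∃ i, s(tLeaf i, tHub) = e) ∨ ∃ j, s(sLeaf j, sHub) = e := by
  simp [graph]

lemma arcs_card : (graph q).arcs.card = 2 := by
  simp [graph]

lemma dig_iff {o : Vtx q → Vtx q → Prop} {a b : Vtx q} :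
    (graph q).dig o a b ↔ a = sHub ∧ b = tHub ∨ a = tHub ∧ b = sink ∨ o a b := by
  simp [MixedGraph.dig, graph, or_assoc]

lemma orient_orientsEdges (I : Finset (Fin (q + 1))) (J : Finset (Fin (2 * q))) :
    OrientsEdges ((graph q).edges : Set (Sym2 (Vtx q))) (orient I J) := by
  constructor
  · rintro a b (⟨i, -, rfl, rfl⟩ | ⟨i, -, rfl, rfl⟩ | ⟨j, -, rfl, rfl⟩ | ⟨j, -, rfl, rfl⟩) <;>
      simp [mem_edges, Sym2.eq_swap]
  · intro a b h
    rcases mem_edges.mp h with ⟨i, hi⟩ | ⟨j, hj⟩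
    · rcases Sym2.eq_iff.mp hi with ⟨rfl, rfl⟩ | ⟨rfl, rfl⟩ <;> simp [orient]
    · rcases Sym2.eq_iff.mp hj with ⟨rfl, rfl⟩ | ⟨rfl, rfl⟩ <;> simp [orient]

/-- The hub of a vertex's undirected component, as an index into the last summand of `Vtx q`
(`sink` is its own hub). -/
def hub : Vtx q → Fin 3 := Sum.elim (fun _ => 0) (Sum.elim (fun _ => 1) id)

lemma hub_eq_of_adj {a b : Vtx q} (h : (graph q).edgeGraph.Adj a b) : hub a = hub b := by
  change s(a, b) ∈ (graph q).edges at h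
  rcases mem_edges.mp h with ⟨i, hi⟩ | ⟨j, hj⟩
  · rcases Sym2.eq_iff.mp hi with ⟨rfl, rfl⟩ | ⟨rfl, rfl⟩ <;> rfl
  · rcases Sym2.eq_iff.mp hj with ⟨rfl, rfl⟩ | ⟨rfl, rfl⟩ <;> rfl

lemma reachable_tHub_iff {a : Vtx q} :
    (graph q).edgeGraph.Reachable a tHub ↔ hub a = 0 := by
  refine ⟨fun h => h.eq_of_forall_adj fun _ _ => hub_eq_of_adj, fun h => ?_⟩
  rcases a with i | j | k
  · exact SimpleGraph.Adj.reachable (mem_edges.mpr (Or.inl ⟨i, rfl⟩))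
  · simp [hub] at h
  · obtain rfl : k = 0 := h
    rfl

lemma dismembered : (graph q).Dismembered := by
  intro c
  left
  rintro a ⟨ha, ⟨p, hp, hpa⟩⟩ b ⟨hb, ⟨r, hr, hrb⟩⟩
  have hab : hub a = hub b := by
    rw [SimpleGraph.ConnectedComponent.mem_supp_iff] at ha hb
    exact (SimpleGraph.ConnectedComponent.exact (ha.trans hb.symm)).eq_of_forall_adj
      fun _ _ => hub_eq_of_adj
  simp only [graph, mem_insert, mem_singleton] at hp hr
  rcases hp with rfl | rfl <;> rcases hr with rfl | rfl <;> rcases hpa with rfl | rfl <;>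
    rcases hrb with rfl | rfl <;> simp_all [hub]

variable (q) in
def tComp : (graph q).edgeGraph.ConnectedComponent :=
  (graph q).edgeGraph.connectedComponentMk tHub

lemma mem_tComp_supp {a : Vtx q} : a ∈ (tComp q).supp ↔ hub a = 0 := by
  rw [SimpleGraph.ConnectedComponent.mem_supp_iff, tComp, SimpleGraph.ConnectedComponent.eq,
    reachable_tHub_iff]

lemma compEdges_tComp : (graph q).compEdges (tComp q) = Set.range fun i => s(tLeaf i, tHub) := by
  ext e
  simp only [MixedGraph.compEdges, mem_edges, mem_tComp_supp, Set.mem_ofPred_eq, Set.mem_range]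
  constructor
  · rintro ⟨⟨i, rfl⟩ | ⟨j, rfl⟩, he⟩
    · exact ⟨i, rfl⟩
    · simp [hub] at he
  · rintro ⟨i, rfl⟩
    exact ⟨Or.inl ⟨i, rfl⟩, by simp [hub]⟩

open Classical in
lemma replaceO_orient {I : Finset (Fin (q + 1))} {J : Finset (Fin (2 * q))}
    {oT : Vtx q → Vtx q → Prop} (hoT : OrientsEdges ((graph q).compEdges (tComp q)) oT) :
    replaceO (graph q) (tComp q) (orient I J) oT = orient {i | oT (tLeaf i) tHub} J := by
  have hedge (i : Fin (q + 1)) : s(tLeaf i, tHub) ∈ (graph q).compEdges (tComp q) := by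
    rw [compEdges_tComp]
    exact ⟨i, rfl⟩
  ext a b
  constructor
  · rintro (⟨hab, hout⟩ | hab)
    · rcases hab with ⟨i, -, rfl, rfl⟩ | ⟨i, -, rfl, rfl⟩ | hJ | hJ
      all_goals simp only [mem_tComp_supp] at hout
      · simp [hub] at hout
      · simp [hub] at hout
      · exact Or.inr (Or.inr (Or.inl hJ))
      · exact Or.inr (Or.inr (Or.inr hJ))
    · obtain ⟨he, hba⟩ := hoT.iff.mp hab
      rw [compEdges_tComp] at he
      obtain ⟨i, hi⟩ := he
      rcases Sym2.eq_iff.mp hi with ⟨rfl, rfl⟩ | ⟨rfl, rfl⟩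
      · exact Or.inl ⟨i, by simpa using hab, rfl, rfl⟩
      · exact Or.inr (Or.inl ⟨i, by simpa using hba, rfl, rfl⟩)
  · rintro (⟨i, hi, rfl, rfl⟩ | ⟨i, hi, rfl, rfl⟩ | ⟨j, hj, rfl, rfl⟩ | ⟨j, hj, rfl, rfl⟩)
    · exact Or.inr (by simpa using hi)
    · exact Or.inr ((hoT.2 _ _ (Sym2.eq_swap ▸ hedge i)).2 (by simpa using hi))
    · refine Or.inl ⟨Or.inr (Or.inr (Or.inl ⟨j, hj, rfl, rfl⟩)), Or.inl ?_⟩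
      exact mem_tComp_supp.not.mpr (by simp [hub])
    · refine Or.inl ⟨Or.inr (Or.inr (Or.inr ⟨j, hj, rfl, rfl⟩)), Or.inl ?_⟩
      exact mem_tComp_supp.not.mpr (by simp [hub])

section reach

variable (I : Finset (Fin (q + 1))) (J : Finset (Fin (2 * q)))

open Relation

lemma reach_sink {b : Vtx q} : ReflTransGen ((graph q).dig (orient I J)) sink b ↔ b = sink := by
  rw [ReflTransGen.cases_head_iff]
  simp [dig_iff, orient, eq_comm]

lemma reach_tLeaf_of_mem {i : Fin (q + 1)} (hi : i ∈ I) {b : Vtx q} :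
    ReflTransGen ((graph q).dig (orient I J)) (tLeaf i) b ↔
      b = tLeaf i ∨ ReflTransGen ((graph q).dig (orient I J)) tHub b := by
  rw [ReflTransGen.cases_head_iff]
  simp [dig_iff, orient, eq_comm, hi]

lemma reach_tLeaf_of_notMem {i : Fin (q + 1)} (hi : i ∉ I) {b : Vtx q} :
    ReflTransGen ((graph q).dig (orient I J)) (tLeaf i) b ↔ b = tLeaf i := by
  rw [ReflTransGen.cases_head_iff]
  simp [dig_iff, orient, eq_comm, hi]

lemma reach_sLeaf_of_mem {j : Fin (2 * q)} (hj : j ∈ J) {b : Vtx q} :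
    ReflTransGen ((graph q).dig (orient I J)) (sLeaf j) b ↔
      b = sLeaf j ∨ ReflTransGen ((graph q).dig (orient I J)) sHub b := by
  rw [ReflTransGen.cases_head_iff]
  simp [dig_iff, orient, eq_comm, hj]

lemma reach_sLeaf_of_notMem {j : Fin (2 * q)} (hj : j ∉ J) {b : Vtx q} :
    ReflTransGen ((graph q).dig (orient I J)) (sLeaf j) b ↔ b = sLeaf j := by
  rw [ReflTransGen.cases_head_iff]
  simp [dig_iff, orient, eq_comm, hj]

lemma reach_tHub {b : Vtx q} :
    ReflTransGen ((graph q).dig (orient I J)) tHub b ↔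
      b = tHub ∨ b = sink ∨ ∃ i ∉ I, b = tLeaf i := by
  have hleaves : (∃ i ∉ I, ReflTransGen ((graph q).dig (orient I J)) (tLeaf i) b) ↔
      ∃ i ∉ I, b = tLeaf i :=
    exists_congr fun _ => and_congr_right fun hi => reach_tLeaf_of_notMem I J hi
  rw [ReflTransGen.cases_head_iff]
  simp [dig_iff, orient, eq_comm, reach_sink, hleaves]

lemma reach_sHub {b : Vtx q} :
    ReflTransGen ((graph q).dig (orient I J)) sHub b ↔
      b = sHub ∨ (b = tHub ∨ b = sink ∨ ∃ i ∉ I, b = tLeaf i) ∨ ∃ j ∉ J, b = sLeaf j := by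
  have hleaves : (∃ j ∉ J, ReflTransGen ((graph q).dig (orient I J)) (sLeaf j) b) ↔
      ∃ j ∉ J, b = sLeaf j :=
    exists_congr fun _ => and_congr_right fun hj => reach_sLeaf_of_notMem I J hj
  rw [ReflTransGen.cases_head_iff]
  simp [dig_iff, orient, eq_comm, reach_tHub, hleaves]

lemma reachWeight_sink : reachWeight ((graph q).dig (orient I J)) (weight q) sink = q := by
  rw [reachWeight_eq_add (P := fun _ => False) _ (by simp [reach_sink]) id]
  simp [weight]

lemma reachWeight_tHub :
    reachWeight ((graph q).dig (orient I J)) (weight q) tHub = q + #Iᶜ := by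
  rw [reachWeight_eq_add _ (fun _ => reach_tHub I J) (by simp)]
  simp [weight, Fintype.sum_sum_type, sum_ite_mem_zero_one, add_comm]

lemma reachWeight_sHub :
    reachWeight ((graph q).dig (orient I J)) (weight q) sHub = 1 + #Jᶜ + (q + #Iᶜ) := by
  rw [reachWeight_eq_add _ (fun _ => reach_sHub I J) (by simp)]
  simp [weight, Fintype.sum_sum_type, Fin.sum_univ_three, sum_ite_mem_zero_one]
  ring

lemma reachWeight_tLeaf (i : Fin (q + 1)) :
    reachWeight ((graph q).dig (orient I J)) (weight q) (tLeaf i) =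
      1 + if i ∈ I then q + #Iᶜ else 0 := by
  by_cases hi : i ∈ I
  · rw [reachWeight_eq_add (P := ReflTransGen ((graph q).dig (orient I J)) tHub) _
      (fun _ => reach_tLeaf_of_mem I J hi) (by simp [reach_tHub, hi]), if_pos hi,
      ← reachWeight_tHub I J]
    rfl
  · rw [reachWeight_eq_add (P := fun _ => False) _
      (fun _ => by simp [reach_tLeaf_of_notMem I J hi]) id]
    simp [hi, weight]

lemma reachWeight_sLeaf (j : Fin (2 * q)) :
    reachWeight ((graph q).dig (orient I J)) (weight q) (sLeaf j) =
      1 + if j ∈ J then 1 + #Jᶜ + (q + #Iᶜ) else 0 := by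
  by_cases hj : j ∈ J
  · rw [reachWeight_eq_add (P := ReflTransGen ((graph q).dig (orient I J)) sHub) _
      (fun _ => reach_sLeaf_of_mem I J hj) (by simp [reach_sHub, hj]), if_pos hj,
      ← reachWeight_sHub I J]
    rfl
  · rw [reachWeight_eq_add (P := fun _ => False) _
      (fun _ => by simp [reach_sLeaf_of_notMem I J hj]) id]
    simp [hj, weight]

lemma Rw_orient :
    Rw ((graph q).dig (orient I J)) (weight q) + (4 * q + 2) =
      (q + 1) + #I * (q + #Iᶜ) + 2 * q + (#J + 1) * (1 + #Jᶜ + (q + #Iᶜ)) + q * q := by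
  have hw : ∑ v, weight q v = 4 * q + 2 := by
    simp [weight, Fintype.sum_sum_type, Fin.sum_univ_three]
    ring
  rw [← hw, Rw_add_sum_eq]
  simp only [Fintype.sum_sum_type, Fin.sum_univ_three, reachWeight_tLeaf, reachWeight_sLeaf,
    reachWeight_sHub, reachWeight_sink]
  simp [weight, sum_add_distrib]
  ring

end reach

/-- With `#Jᶜ = 2k` the gap is `Rw (orient I₀ J) - Rw (orient I J) = (#I - k)²`. -/
lemma Rw_orient_lt {I I₀ : Finset (Fin (q + 1))} {J : Finset (Fin (2 * q))} {k : ℕ}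
    (hJ : #Jᶜ = 2 * k) (hI₀ : #I₀ = k) (hI : #I ≠ k) :
    Rw ((graph q).dig (orient I J)) (weight q) < Rw ((graph q).dig (orient I₀ J)) (weight q) := by
  have h := Rw_orient I J
  have h₀ := Rw_orient I₀ J
  have hc := card_compl_add_card I
  have hc₀ := card_compl_add_card I₀
  have hcJ := card_compl_add_card J
  simp only [Fintype.card_fin] at hc hc₀ hcJ
  have hsq : 0 < ((#I : ℤ) - k) ^ 2 := by
    have : (#I : ℤ) ≠ k := by exact_mod_cast hI
    positivity
  zify at h h₀ hc hc₀ hcJ hJ hI₀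
  nlinarith

open Classical in
lemma exists_mem_card_leaves_into_tHub_eq {𝒯 : Set (Vtx q → Vtx q → Prop)}
    (h𝒯 : IsOptReplacementSet (graph q) (weight q) (tComp q) 𝒯) {k : ℕ} (hk : k ≤ q) :
    ∃ oT ∈ 𝒯, #{i | oT (tLeaf i) tHub} = k := by
  obtain ⟨I, -, hI⟩ := exists_subset_card_eq (s := (univ : Finset (Fin (q + 1)))) (n := k)
    (by simp; omega)
  obtain ⟨J, -, hJ⟩ := exists_subset_card_eq (s := (univ : Finset (Fin (2 * q))))
    (n := 2 * q - 2 * k) (by simp)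
  have hJc : #Jᶜ = 2 * k := by
    rw [card_compl, Fintype.card_fin, hJ]
    omega
  obtain ⟨oT, hoT, hle⟩ := h𝒯.2 _ (orient_orientsEdges I J)
  rw [replaceO_orient (h𝒯.1 oT hoT)] at hle
  exact ⟨oT, hoT, by_contra fun hne => (Rw_orient_lt hJc hI hne).not_ge hle⟩

end StarGadget

theorem stmt15_general (q : ℕ) :
    ∃ (V : Type) (_ : Fintype V) (_ : DecidableEq V) (G : MixedGraph V) (w : V → ℕ)
      (c : G.edgeGraph.ConnectedComponent),
      G.arcs.card = 2 ∧ G.Dismembered ∧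
        ∀ 𝒯 : Set (V → V → Prop), IsOptReplacementSet G w c 𝒯 →
          ∃ f : Fin (q + 1) → (V → V → Prop), Function.Injective f ∧ ∀ i, f i ∈ 𝒯 := by
  refine ⟨StarGadget.Vtx q, inferInstance, inferInstance, StarGadget.graph q,
    StarGadget.weight q, StarGadget.tComp q, StarGadget.arcs_card, StarGadget.dismembered,
    fun 𝒯 h𝒯 => ?_⟩
  choose f hf𝒯 hf using fun k : Fin (q + 1) => StarGadget.exists_mem_card_leaves_into_tHub_eq h𝒯 k.is_le
  exact ⟨f, fun k k' h => Fin.ext (by rw [← hf k, ← hf k', h]), hf𝒯⟩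

/-- For every positive integer `q` there is a dismembered mixed graph with exactly
two arcs, a weight function and an undirected component such that every optimal
replacement set for it has at least `q + 1` elements. -/
theorem stmt15 (q : ℕ) (hq : 0 < q) :
    ∃ (V : Type) (_ : Fintype V) (_ : DecidableEq V) (G : MixedGraph V) (w : V → ℕ)
      (c : G.edgeGraph.ConnectedComponent),
      G.arcs.card = 2 ∧ G.Dismembered ∧
        ∀ 𝒯 : Set (V → V → Prop), IsOptReplacementSet G w c 𝒯 →
          ∃ f : Fin (q + 1) → (V → V → Prop), Function.Injective f ∧ ∀ i, f i ∈ 𝒯 :=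
  stmt15_general q
end
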